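/- arXiv:1312.0877 — 7 statements merged into one kernel-verified Lean document; each statement's English description precedes it below -/
import Mathlib

section
/- Let K be an ordered field, L ⊆ K a subfield, and x ∈ K algebraic over L. Then x is neither infinitely large nor infinitely small with respect to L. -/
/-!
A root `x` of a monic polynomial `X ^ n + c_{n-1} X ^ (n-1) + ⋯ + c_0` satisfies
`|x| ≤ 1 + ∑ |c_i|`: if `|x| > 1`, then `|x| ^ n = |∑ c_i x ^ i| ≤ (∑ |c_i|) |x| ^ (n-1)`.
Applied to the minimal polynomial over `L`, this bound lies in `L`, so an algebraic `x` is not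
infinitely large; applied to `x⁻¹`, which is algebraic as well, it shows `x` is not infinitely small.
-/

open Polynomial Finset

theorem Polynomial.Monic.abs_le_one_add_sum_abs_coeff_of_isRoot
    {R : Type*} [CommRing R] [LinearOrder R] [IsStrictOrderedRing R]
    {p : R[X]} (hp : p.Monic) {x : R} (hx : p.IsRoot x) :
    |x| ≤ 1 + ∑ i ∈ range p.natDegree, |p.coeff i| := by
  set n := p.natDegree
  set S := ∑ i ∈ range n, |p.coeff i|
  rcases le_or_gt |x| 1 with h1 | h1
  · linarith [show 0 ≤ S from sum_nonneg fun i _ => abs_nonneg _]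
  have hn : 0 < n := hp.natDegree_pos.2 fun h => by simp [h] at hx
  have hxn : x ^ n = -∑ i ∈ range n, p.coeff i * x ^ i := by
    have := hx.eq_zero
    rw [eval_eq_sum_range, sum_range_succ, hp.coeff_natDegree, one_mul] at this
    linear_combination this
  have hbound : |x| ^ (n - 1) * |x| ≤ |x| ^ (n - 1) * S :=
    calc |x| ^ (n - 1) * |x| = |x ^ n| := by rw [← pow_succ, Nat.sub_add_cancel hn, abs_pow]
      _ = |∑ i ∈ range n, p.coeff i * x ^ i| := by rw [hxn, abs_neg]
      _ ≤ ∑ i ∈ range n, |p.coeff i * x ^ i| := abs_sum_le_sum_abs _ _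
      _ ≤ ∑ i ∈ range n, |p.coeff i| * |x| ^ (n - 1) := by
        refine sum_le_sum fun i hi => ?_
        rw [abs_mul, abs_pow]
        exact mul_le_mul_of_nonneg_left
          (pow_le_pow_right₀ h1.le (Nat.le_sub_one_of_lt (mem_range.1 hi))) (abs_nonneg _)
      _ = |x| ^ (n - 1) * S := by rw [← sum_mul, mul_comm]
  linarith [le_of_mul_le_mul_left hbound (pow_pos (zero_lt_one.trans h1) _)]

section

variable {K : Type*} [Field K] [LinearOrder K] [IsStrictOrderedRing K] {L : Subfield K} {x : K}

theorem IsAlgebraic.exists_mem_abs_le (hx : IsAlgebraic L x) : ∃ a ∈ L, 0 < a ∧ |x| ≤ a := by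
  set p := (minpoly L x).map (algebraMap L K)
  have hp : p.Monic := (minpoly.monic hx.isIntegral).map _
  have hroot : p.IsRoot x := by simp [p]
  refine ⟨_, ?_, ?_, hp.abs_le_one_add_sum_abs_coeff_of_isRoot hroot⟩
  · exact L.add_mem L.one_mem <| L.sum_mem fun i _ => abs_mem_iff.2 <| by rw [coeff_map]; exact SetLike.coe_mem _
  · positivity

theorem IsAlgebraic.exists_mem_le_abs (hx : IsAlgebraic L x) (hx0 : x ≠ 0) :
    ∃ a ∈ L, 0 < a ∧ a ≤ |x| := by
  obtain ⟨a, haL, ha0, hxa⟩ := hx.inv.exists_mem_abs_le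
  refine ⟨a⁻¹, L.inv_mem haL, inv_pos.2 ha0, ?_⟩
  rw [abs_inv] at hxa
  simpa using inv_anti₀ (inv_pos.2 (abs_pos.2 hx0)) hxa

end

/-- If `x ∈ K` is algebraic over a subfield `L`, then `x` is neither
infinitely large nor infinitely small with respect to `L`. -/
theorem stmt_3 (K : Type*) [Field K] [LinearOrder K] [IsStrictOrderedRing K] (L : Subfield K) (x : K)
    (hx : IsAlgebraic L x) :
    ¬ (∀ a ∈ L, 0 < a → a < |x|) ∧ ¬ (x ≠ 0 ∧ ∀ a ∈ L, 0 < a → |x| < a) := by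
  refine ⟨fun H => ?_, fun ⟨hx0, H⟩ => ?_⟩
  · obtain ⟨a, haL, ha0, hxa⟩ := hx.exists_mem_abs_le
    exact (H a haL ha0).not_ge hxa
  · obtain ⟨a, haL, ha0, hax⟩ := hx.exists_mem_le_abs hx0
    exact (H a haL ha0).not_ge hax
end

section
/- Let K be a real closed ordered field and A the valuation ring of elements of K not infinitely large over ℚ, with maximal ideal M of infinitesimals. If P(X) = X^r + c_{r-1}X^{r-1} + ⋯ + c_1 X + c_0 ∈ A[X] is a monic polynomial with c_0 ∈ M and c_1 ∉ M, then P has a root in M. -/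
/-!
A real closed field satisfies the intermediate value theorem for polynomials: by the
Artin–Schreier argument (Sylow theory in the Galois group of a splitting field containing
`√-1`) every irreducible polynomial has degree at most two, and irreducible factors of
degree one or two cannot change sign across an interval without a root in it.

For the theorem, let `s = √|c₀|`, which is infinitesimal. On `|t| = s` the terms of `P` other
than `c₁ t` are bounded by `s² + r B s²`, where `B` bounds the coefficients, while `|c₁ t|`
is `|c₁| s` with `|c₁|` not infinitesimal. Hence `P(-s)` and `P(s)` have opposite signs and
`P` has a root in `(-s, s) ⊆ M`.
-/

open Polynomial IntermediateField Module

theorem Polynomial.eval_eq_of_natDegree_le_two {R : Type*} [CommSemiring R] {q : R[X]}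
    (hq : q.natDegree ≤ 2) (x : R) :
    q.eval x = q.coeff 2 * (x * x) + q.coeff 1 * x + q.coeff 0 := by
  rw [eval_eq_sum_range' (Nat.lt_succ_of_le hq), Finset.sum_range_succ, Finset.sum_range_succ,
    Finset.sum_range_one]
  ring

theorem Polynomial.natDegree_eq_one_of_irreducible_of_isRoot {K : Type*} [Field K] {p : K[X]}
    (hp : Irreducible p) {x : K} (hx : p.IsRoot x) : p.natDegree = 1 :=
  natDegree_eq_of_degree_eq_some (degree_eq_one_of_irreducible_of_root hp hx)

theorem Polynomial.natDegree_eq_natDegree_minpoly {K L : Type*} [Field K] [Ring L] [Nontrivial L]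
    [Algebra K L] {g : K[X]} (hg : Irreducible g) {x : L} (hx : aeval x g = 0) :
    g.natDegree = (minpoly K x).natDegree := by
  rw [← minpoly.eq_of_irreducible hg hx,
    natDegree_mul_C (inv_ne_zero (leadingCoeff_ne_zero.mpr hg.ne_zero))]

theorem Polynomial.SplittingField.exists_aeval_eq_zero_of_dvd {K : Type*} [Field K]
    {f p : K[X]} (hf : f ≠ 0) (hp : p ∣ f) (hp0 : p.degree ≠ 0) :
    ∃ x : f.SplittingField, aeval x p = 0 := by
  obtain ⟨x, hx⟩ := ((SplittingField.splits f).of_dvd (map_ne_zero hf)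
    (map_dvd _ hp)).exists_eval_eq_zero (by rwa [degree_map])
  exact ⟨x, by rwa [aeval_def, eval₂_eq_eval_map]⟩

theorem minpoly.natDegree_le_two_of_sq_eq_neg_one {K L : Type*} [Field K] [Ring L] [Algebra K L]
    {i : L} (hi : i ^ 2 = -1) : (minpoly K i).natDegree ≤ 2 := by
  have hmonic : (X ^ 2 + 1 : K[X]).Monic := by monicity!
  have := natDegree_le_of_dvd (minpoly.dvd K i (by simp [hi])) hmonic.ne_zero
  rwa [← C_1, natDegree_X_pow_add_C] at this

theorem Polynomial.exists_isRoot_of_natDegree_eq_two {E : Type*} [Field E] [NeZero (2 : E)]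
    (hsq : ∀ x : E, IsSquare x) {q : E[X]} (hq : q.natDegree = 2) : ∃ x, q.IsRoot x := by
  have hlead : q.coeff 2 ≠ 0 := by
    rw [← hq]; exact leadingCoeff_ne_zero.mpr (ne_zero_of_natDegree_gt (hq ▸ two_pos))
  obtain ⟨x, hx⟩ := exists_quadratic_eq_zero hlead (hsq _)
  exact ⟨x, by rw [IsRoot, eval_eq_of_natDegree_le_two hq.le, hx]⟩

theorem finrank_ne_two_of_forall_isSquare {E F : Type*} [Field E] [NeZero (2 : E)] [Field F]
    [Algebra E F] (hsq : ∀ x : E, IsSquare x) : finrank E F ≠ 2 := by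
  intro hF
  have : FiniteDimensional E F := .of_finrank_pos (by omega)
  have hbot : (⊤ : IntermediateField E F) = ⊥ := by
    refine eq_bot_iff.mpr fun α _ ↦ ?_
    have hint : IsIntegral E α := .of_finite E α
    have hdvd : (minpoly E α).natDegree ∣ 2 := hF ▸ minpoly.degree_dvd hint
    have hne : (minpoly E α).natDegree ≠ 2 := fun h2 ↦ by
      obtain ⟨x, hx⟩ := exists_isRoot_of_natDegree_eq_two hsq h2
      have := natDegree_eq_one_of_irreducible_of_isRoot (minpoly.irreducible hint) hx
      omega
    have h1 : (minpoly E α).natDegree = 1 :=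
      ((Nat.dvd_prime Nat.prime_two).mp hdvd).resolve_right hne
    exact mem_bot.mpr (minpoly.natDegree_eq_one_iff.mp h1)
  have := finrank_top' (F := E) (E := F)
  rw [hbot, IntermediateField.finrank_bot] at this
  omega

theorem IsGalois.exists_finrank_eq_two_pow {K L : Type*} [Field K] [Field L] [Algebra K L]
    [FiniteDimensional K L] [IsGalois K L]
    (h : ∀ F : IntermediateField K L, Odd (finrank K F) → finrank K F = 1) :
    ∃ k, finrank K L = 2 ^ k := by
  have : Fact (Nat.Prime 2) := ⟨Nat.prime_two⟩
  obtain ⟨S⟩ : Nonempty (Sylow 2 Gal(L/K)) := inferInstance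
  set H : Subgroup Gal(L/K) := S.toSubgroup
  have hKL := finrank_mul_finrank K (fixedField H) L
  rw [finrank_fixedField_eq_card] at hKL
  have hindex : finrank K (fixedField H) = H.index := by
    rw [← IsGalois.card_aut_eq_finrank K L, ← H.index_mul_card] at hKL
    exact Nat.eq_of_mul_eq_mul_right Nat.card_pos hKL
  have hodd : Odd (finrank K (fixedField H)) :=
    hindex ▸ Nat.odd_iff.mpr (Nat.two_dvd_ne_zero.mp S.not_dvd_index)
  exact ⟨_, by rw [← hKL, h _ hodd, one_mul, Sylow.card_eq_multiplicity S]⟩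

theorem IsGalois.finrank_eq_one_of_forall_finrank_ne_two {E L : Type*} [Field E] [Field L]
    [Algebra E L] [FiniteDimensional E L] [IsGalois E L] {k : ℕ} (hk : finrank E L = 2 ^ k)
    (h : ∀ F : IntermediateField E L, finrank E F ≠ 2) : finrank E L = 1 := by
  have : Fact (Nat.Prime 2) := ⟨Nat.prime_two⟩
  rcases k with _ | k
  · exact hk
  obtain ⟨H, hH⟩ := Sylow.exists_subgroup_card_pow_prime 2 (n := k)
    (by rw [IsGalois.card_aut_eq_finrank E L, hk]; exact pow_dvd_pow 2 k.le_succ)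
  have hEL := finrank_mul_finrank E (fixedField H) L
  rw [finrank_fixedField_eq_card, hH, hk, pow_succ'] at hEL
  exact absurd (Nat.eq_of_mul_eq_mul_right (by positivity) hEL) (h _)

theorem IsRealClosed.finrank_eq_one_of_odd {K F : Type*} [Field K] [IsRealClosed K] [Field F]
    [Algebra K F] [FiniteDimensional K F] (h : Odd (finrank K F)) : finrank K F = 1 := by
  obtain ⟨α, hα⟩ := Field.exists_primitive_element K F
  have hint : IsIntegral K α := .of_finite K α
  rw [← finrank_top', ← hα, adjoin.finrank hint] at h ⊢
  obtain ⟨x, hx⟩ := IsRealClosed.exists_isRoot_of_odd_natDegree h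
  exact natDegree_eq_one_of_irreducible_of_isRoot (minpoly.irreducible hint) hx

namespace IsRealClosed

variable {K : Type*} [Field K] [LinearOrder K] [IsStrictOrderedRing K] [IsRealClosed K]

/-- Square roots in `K(i)`: `(c + d i)² = x + y i`. -/
theorem exists_sq_sub_sq_eq_and_two_mul_mul_eq (x y : K) :
    ∃ c d : K, c ^ 2 - d ^ 2 = x ∧ 2 * c * d = y := by
  obtain ⟨r, hr⟩ := exists_eq_pow_of_nonneg (by positivity : 0 ≤ x ^ 2 + y ^ 2) two_ne_zero
  have hxr : |x| ≤ |r| := sq_le_sq.mp (by nlinarith)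
  obtain ⟨c, hc⟩ := exists_eq_pow_of_nonneg (by cases abs_cases x <;> linarith [abs_nonneg r] :
    0 ≤ (|r| + x) / 2) two_ne_zero
  obtain ⟨d, hd⟩ := exists_eq_pow_of_nonneg (by cases abs_cases x <;> linarith [abs_nonneg r] :
    0 ≤ (|r| - x) / 2) two_ne_zero
  have hcd : (2 * c * d) ^ 2 = y ^ 2 := by
    have : (2 * c * d) ^ 2 = |r| ^ 2 - x ^ 2 := by
      linear_combination (-4 * c ^ 2) * hd - 4 * ((|r| - x) / 2) * hc
    nlinarith [sq_abs r]
  rcases sq_eq_sq_iff_eq_or_eq_neg.mp hcd with h | h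
  · exact ⟨c, d, by linarith, h⟩
  · exact ⟨c, -d, by linarith, by linarith⟩

theorem isSquare_of_sq_eq_neg_one {L : Type*} [Field L] [Algebra K L] {i : L} (hi : i ^ 2 = -1)
    (z : K⟮i⟯) : IsSquare z := by
  have hint : IsIntegral K i := ⟨X ^ 2 + 1, by monicity!, by simp [hi]⟩
  set pb := adjoin.powerBasis hint
  have hgen : pb.gen ^ 2 = -1 := Subtype.ext (by simpa [pb] using hi)
  obtain ⟨f, hf, rfl⟩ := pb.exists_eq_aeval z
  have hf1 : f.natDegree ≤ 1 := by
    have := minpoly.natDegree_le_two_of_sq_eq_neg_one (K := K) hi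
    rw [adjoin.powerBasis_dim] at hf
    omega
  obtain ⟨c, d, hc, hd⟩ := exists_sq_sub_sq_eq_and_two_mul_mul_eq (f.coeff 0) (f.coeff 1)
  refine ⟨algebraMap K _ c + algebraMap K _ d * pb.gen, ?_⟩
  rw [eq_X_add_C_of_natDegree_le_one hf1, ← hc, ← hd]
  simp only [map_add, map_mul, aeval_C, aeval_X, map_sub, map_pow, map_ofNat]
  linear_combination (-(algebraMap K _ d) ^ 2) * hgen

theorem natDegree_le_two_of_irreducible {g : K[X]} (hg : Irreducible g) : g.natDegree ≤ 2 := by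
  have hf : g * (X ^ 2 + 1) ≠ 0 := mul_ne_zero hg.ne_zero (Monic.ne_zero (by monicity!))
  set L := (g * (X ^ 2 + 1)).SplittingField
  obtain ⟨ρ, hρ⟩ := SplittingField.exists_aeval_eq_zero_of_dvd hf (dvd_mul_right g _)
    (degree_pos_of_irreducible hg).ne'
  obtain ⟨i, hi⟩ := SplittingField.exists_aeval_eq_zero_of_dvd hf (dvd_mul_left (X ^ 2 + 1) g)
    (by rw [← C_1, degree_X_pow_add_C two_pos]; decide)
  replace hi : i ^ 2 = -1 := by simpa [add_eq_zero_iff_eq_neg] using hi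
  have : IsGalois K L := ⟨⟩
  obtain ⟨k, hk⟩ := IsGalois.exists_finrank_eq_two_pow (K := K) (L := L)
    fun _ hF ↦ finrank_eq_one_of_odd hF
  have : IsGalois K⟮i⟯ L := IsGalois.tower_top_of_isGalois K K⟮i⟯ L
  obtain ⟨m, -, hm⟩ := (Nat.dvd_prime_pow Nat.prime_two).mp
    (hk ▸ Dvd.intro_left _ (finrank_mul_finrank K K⟮i⟯ L))
  have hiL : finrank K⟮i⟯ L = 1 := IsGalois.finrank_eq_one_of_forall_finrank_ne_two hm
    fun _ ↦ finrank_ne_two_of_forall_isSquare (isSquare_of_sq_eq_neg_one hi)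
  calc g.natDegree = (minpoly K ρ).natDegree := natDegree_eq_natDegree_minpoly hg hρ
    _ ≤ finrank K L := minpoly.natDegree_le ρ
    _ = finrank K K⟮i⟯ := by rw [← finrank_mul_finrank K K⟮i⟯ L, hiL, mul_one]
    _ = (minpoly K i).natDegree := adjoin.finrank (.of_finite K i)
    _ ≤ 2 := minpoly.natDegree_le_two_of_sq_eq_neg_one hi

theorem eval_mul_eval_pos_of_natDegree_eq_two {q : K[X]} (hq : q.natDegree = 2)
    (hroot : ∀ x, ¬q.IsRoot x) (u v : K) : 0 < q.eval u * q.eval v := by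
  have ha : q.coeff 2 ≠ 0 := by
    rw [← hq]; exact leadingCoeff_ne_zero.mpr (ne_zero_of_natDegree_gt (hq ▸ two_pos))
  have hdisc : discrim (q.coeff 2) (q.coeff 1) (q.coeff 0) < 0 := by
    by_contra! h
    obtain ⟨x, hx⟩ := exists_quadratic_eq_zero ha (nonneg_iff_isSquare.mp h)
    exact hroot x (by rw [IsRoot, eval_eq_of_natDegree_le_two hq.le, hx])
  have hpos : ∀ x, 0 < q.coeff 2 * q.eval x := fun x ↦ by
    rw [eval_eq_of_natDegree_le_two hq.le, discrim] at *
    nlinarith [sq_nonneg (2 * q.coeff 2 * x + q.coeff 1)]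
  exact pos_of_mul_pos_right (by nlinarith [mul_pos (hpos u) (hpos v)] :
    0 < q.coeff 2 ^ 2 * (q.eval u * q.eval v)) (sq_nonneg _)

theorem exists_mem_Ioo_isRoot_or_eval_mul_eval_nonneg {p : K[X]} (hp : Irreducible p) {u v : K}
    (huv : u ≤ v) : (∃ x ∈ Set.Ioo u v, p.IsRoot x) ∨ 0 ≤ p.eval u * p.eval v := by
  by_cases hroot : ∃ t, p.IsRoot t
  · obtain ⟨t, ht⟩ := hroot
    obtain ⟨q, rfl⟩ := dvd_iff_isRoot.mpr ht
    obtain ⟨c, -, rfl⟩ := Polynomial.isUnit_iff.mp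
      ((hp.isUnit_or_isUnit rfl).resolve_left (not_isUnit_X_sub_C t))
    by_cases htuv : t ∈ Set.Ioo u v
    · exact .inl ⟨t, htuv, ht⟩
    rw [Set.mem_Ioo, not_and_or, not_lt, not_lt] at htuv
    have hsign : 0 ≤ (u - t) * (v - t) := by
      rcases htuv with h | h
      · exact mul_nonneg (by linarith) (by linarith)
      · exact mul_nonneg_of_nonpos_of_nonpos (by linarith) (by linarith)
    right
    calc 0 ≤ (u - t) * (v - t) * (c * c) := mul_nonneg hsign (mul_self_nonneg c)
      _ = _ := by simp only [eval_mul, eval_sub, eval_X, eval_C]; ring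
  · simp only [not_exists] at hroot
    have h0 : p.natDegree ≠ 0 :=
      (natDegree_pos_iff_degree_pos.mpr (degree_pos_of_irreducible hp)).ne'
    have h1 : p.natDegree ≠ 1 := fun h ↦ by
      obtain ⟨x, hx⟩ := exists_root_of_degree_eq_one
        ((degree_eq_iff_natDegree_eq_of_pos one_pos).mpr h)
      exact hroot x hx
    have := natDegree_le_two_of_irreducible hp
    exact .inr (eval_mul_eval_pos_of_natDegree_eq_two (by omega) hroot u v).le

theorem exists_mem_Ioo_isRoot {f : K[X]} {u v : K} (huv : u ≤ v)
    (h : f.eval u * f.eval v < 0) : ∃ x ∈ Set.Ioo u v, f.IsRoot x := by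
  induction f using UniqueFactorizationMonoid.induction_on_prime with
  | h₁ => simp at h
  | h₂ f hf =>
    obtain ⟨c, -, rfl⟩ := Polynomial.isUnit_iff.mp hf
    simp only [eval_C] at h
    nlinarith [mul_self_nonneg c]
  | h₃ f p _ hp ih =>
    rw [eval_mul, eval_mul, mul_mul_mul_comm] at h
    rcases exists_mem_Ioo_isRoot_or_eval_mul_eval_nonneg hp.irreducible huv with
      ⟨x, hx, hroot⟩ | hnonneg
    · exact ⟨x, hx, by simp [hroot.eq_zero]⟩
    · obtain ⟨x, hx, hroot⟩ := ih (neg_of_mul_neg_right h hnonneg)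
      exact ⟨x, hx, by simp [hroot.eq_zero]⟩

end IsRealClosed

section OrderedRing

variable {R : Type*} [CommRing R] [LinearOrder R] [IsStrictOrderedRing R]

theorem mul_pos_of_abs_sub_lt_abs {a b : R} (h : |a - b| < |b|) : 0 < a * b := by
  rcases le_total 0 b with hb | hb
  · rw [abs_of_nonneg hb] at h
    nlinarith [(abs_lt.mp h).1, (abs_lt.mp h).2]
  · rw [abs_of_nonpos hb] at h
    nlinarith [(abs_lt.mp h).1, (abs_lt.mp h).2]

theorem Polynomial.exists_nat_forall_abs_coeff_le {P : R[X]}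
    (h : ∀ i, ∃ n : ℕ, |P.coeff i| ≤ n) : ∃ B : ℕ, ∀ i, |P.coeff i| ≤ B := by
  choose b hb using h
  refine ⟨(Finset.range (P.natDegree + 1)).sup b, fun i ↦ ?_⟩
  by_cases hi : i ≤ P.natDegree
  · exact (hb i).trans (Nat.cast_le.mpr (Finset.le_sup (Finset.mem_range_succ_iff.mpr hi)))
  · rw [coeff_eq_zero_of_natDegree_lt (not_le.mp hi), abs_zero]
    exact Nat.cast_nonneg _

theorem Polynomial.abs_eval_sub_linear_le {P : R[X]} {B t : R} (hB : ∀ i, |P.coeff i| ≤ B)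
    (ht : |t| ≤ 1) : |P.eval t - (P.coeff 0 + P.coeff 1 * t)| ≤ P.natDegree * B * t ^ 2 := by
  have htail : P.eval t - (P.coeff 0 + P.coeff 1 * t) =
      ∑ i ∈ Finset.range P.natDegree, P.coeff (i + 2) * t ^ (i + 2) := by
    rw [eval_eq_sum_range' (by omega : P.natDegree < P.natDegree + 2), Finset.sum_range_succ',
      Finset.sum_range_succ']
    ring
  have hterm : ∀ i, |P.coeff (i + 2) * t ^ (i + 2)| ≤ B * t ^ 2 := fun i ↦ by
    rw [abs_mul, abs_pow, pow_add, sq_abs]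
    exact mul_le_mul (hB _) (mul_le_of_le_one_left (sq_nonneg t) (pow_le_one₀ (abs_nonneg t) ht))
      (by positivity) ((abs_nonneg _).trans (hB 0))
  calc |P.eval t - (P.coeff 0 + P.coeff 1 * t)|
      ≤ ∑ i ∈ Finset.range P.natDegree, |P.coeff (i + 2) * t ^ (i + 2)| :=
        htail ▸ Finset.abs_sum_le_sum_abs _ _
    _ ≤ ∑ _i ∈ Finset.range P.natDegree, B * t ^ 2 := Finset.sum_le_sum fun i _ ↦ hterm i
    _ = P.natDegree * B * t ^ 2 := by
        rw [Finset.sum_const, Finset.card_range, nsmul_eq_mul, mul_assoc]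

theorem Polynomial.eval_neg_mul_eval_neg_of_abs_coeff_one_gt {P : R[X]} {B s : R}
    (hB : ∀ i, |P.coeff i| ≤ B) (hs0 : 0 < s) (hs1 : s ≤ 1) (hc0 : |P.coeff 0| ≤ s ^ 2)
    (hc1 : (1 + P.natDegree * B) * s < |P.coeff 1|) : P.eval (-s) * P.eval s < 0 := by
  have hdom : ∀ t, |t| = s → 0 < P.eval t * (P.coeff 1 * t) := fun t ht ↦ by
    refine mul_pos_of_abs_sub_lt_abs ?_
    have htail := abs_eval_sub_linear_le hB (ht ▸ hs1)
    rw [← sq_abs, ht] at htail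
    calc |P.eval t - P.coeff 1 * t|
        = |P.coeff 0 + (P.eval t - (P.coeff 0 + P.coeff 1 * t))| := by congr 1; ring
      _ ≤ |P.coeff 0| + |P.eval t - (P.coeff 0 + P.coeff 1 * t)| := abs_add_le _ _
      _ ≤ (1 + P.natDegree * B) * s * s := by nlinarith
      _ < |P.coeff 1| * s := mul_lt_mul_of_pos_right hc1 hs0
      _ = |P.coeff 1 * t| := by rw [abs_mul, ht]
  have hpos := mul_pos (hdom s (abs_of_pos hs0)) (hdom (-s) (by rw [abs_neg, abs_of_pos hs0]))
  nlinarith [sq_nonneg (P.coeff 1 * s)]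

end OrderedRing

section Infinitesimal

variable {K : Type*} [Field K] [LinearOrder K]

def IsInfinitesimal (x : K) : Prop := ∀ n : ℕ, 0 < n → |x| < 1 / (n : K)

theorem IsInfinitesimal.of_abs_le {x y : K} (hy : IsInfinitesimal y) (hxy : |x| ≤ |y|) :
    IsInfinitesimal x :=
  fun n hn ↦ hxy.trans_lt (hy n hn)

variable [IsStrictOrderedRing K]

theorem IsInfinitesimal.of_sq {x : K} (hx : IsInfinitesimal (x ^ 2)) : IsInfinitesimal x := by
  intro n hn
  have h := hx (n ^ 2) (by positivity)
  rw [abs_pow, Nat.cast_pow, ← one_div_pow] at h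
  exact lt_of_pow_lt_pow_left₀ 2 (by positivity) h

theorem IsInfinitesimal.nat_mul_abs_lt {x y : K} (hx : IsInfinitesimal x)
    (hy : ¬IsInfinitesimal y) (C : ℕ) : C * |x| < |y| := by
  obtain ⟨n, hn, hny⟩ : ∃ n : ℕ, 0 < n ∧ 1 / (n : K) ≤ |y| := by
    simpa [IsInfinitesimal] using hy
  have hxn := hx (n * (C + 1)) (by positivity)
  have hC : (0 : K) < C + 1 := by positivity
  calc C * |x| ≤ (C + 1) * |x| := by gcongr; linarith
    _ < (C + 1) * (1 / (n * (C + 1) : ℕ)) := by gcongr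
    _ = 1 / n := by push_cast; field_simp
    _ ≤ |y| := hny

end Infinitesimal

theorem stmt_5_general (K : Type*) [Field K] [LinearOrder K] [IsStrictOrderedRing K]
    (hsq : ∀ x : K, 0 < x → ∃ y : K, y ^ 2 = x)
    (hodd : ∀ P : Polynomial K, Odd P.natDegree → ∃ x : K, P.eval x = 0)
    (P : Polynomial K)
    (hcoeff : ∀ i, ∃ n : ℕ, |P.coeff i| ≤ (n : K))
    (hc0 : ∀ n : ℕ, 0 < n → |P.coeff 0| < 1 / (n : K))
    (hc1 : ¬ (∀ n : ℕ, 0 < n → |P.coeff 1| < 1 / (n : K))) :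
    ∃ x : K, (∀ n : ℕ, 0 < n → |x| < 1 / (n : K)) ∧ P.eval x = 0 := by
  have : IsRealClosed K := .of_linearOrderedField
    (fun hx ↦ hx.eq_or_lt.elim (fun h ↦ h ▸ .zero) fun h ↦ (hsq _ h).imp fun y hy ↦ by rw [← hy, sq])
    (fun hf ↦ hodd _ hf)
  by_cases h0 : P.coeff 0 = 0
  · exact ⟨0, fun n hn ↦ by simp [hn], by rwa [← coeff_zero_eq_eval_zero]⟩
  obtain ⟨B, hB⟩ := exists_nat_forall_abs_coeff_le hcoeff
  obtain ⟨s, hs0, hs_sq⟩ : ∃ s : K, 0 < s ∧ s ^ 2 = |P.coeff 0| := by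
    obtain ⟨y, hy⟩ := hsq _ (abs_pos.mpr h0)
    exact ⟨|y|, abs_pos.mpr fun hy0 ↦ h0 (abs_eq_zero.mp (by rw [← hy, hy0]; ring)),
      by rw [sq_abs, hy]⟩
  have hs : IsInfinitesimal s :=
    IsInfinitesimal.of_sq (IsInfinitesimal.of_abs_le hc0 (by rw [hs_sq, abs_abs]))
  have hs1 : s ≤ 1 := by simpa [abs_of_pos hs0] using (hs 1 one_pos).le
  have hc1s : (1 + P.natDegree * B) * s < |P.coeff 1| := by
    simpa [abs_of_pos hs0] using hs.nat_mul_abs_lt hc1 (1 + P.natDegree * B)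
  obtain ⟨x, hx, hroot⟩ := IsRealClosed.exists_mem_Ioo_isRoot (neg_le_self hs0.le)
    (eval_neg_mul_eval_neg_of_abs_coeff_one_gt hB hs0 hs1 hs_sq.ge hc1s)
  exact ⟨x, hs.of_abs_le (by rw [abs_of_pos hs0]; exact (abs_lt.mpr hx).le), hroot⟩

/-- Over a real closed field `K` (every positive element is a square and every
odd-degree polynomial has a root), let `A` be the valuation ring of elements not infinitely
large over `ℚ` and `M` its maximal ideal of infinitesimals. Every monic polynomial over `A`
of positive degree whose constant term lies in `M` and whose linear coefficient is not in `M`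
(an N-polynomial) has a root in `M`. -/
theorem stmt_5 (K : Type*) [Field K] [LinearOrder K] [IsStrictOrderedRing K]
    (hsq : ∀ x : K, 0 < x → ∃ y : K, y ^ 2 = x)
    (hodd : ∀ P : Polynomial K, Odd P.natDegree → ∃ x : K, P.eval x = 0)
    (hna : ∃ x : K, ∀ n : ℕ, (n : K) < x)
    (P : Polynomial K) (hmonic : P.Monic) (hdeg : 1 ≤ P.natDegree)
    (hcoeff : ∀ i, ∃ n : ℕ, |P.coeff i| ≤ (n : K))
    (hc0 : ∀ n : ℕ, 0 < n → |P.coeff 0| < 1 / (n : K))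
    (hc1 : ¬ (∀ n : ℕ, 0 < n → |P.coeff 1| < 1 / (n : K))) :
    ∃ x : K, (∀ n : ℕ, 0 < n → |x| < 1 / (n : K)) ∧ P.eval x = 0 :=
  stmt_5_general K hsq hodd P hcoeff hc0 hc1
end

section
/- Let K be a real closed ordered field and A a valuation subring of K with maximal ideal M. If a monic polynomial p(X) ∈ A[X] with constant term in M and linear coefficient not in M factors as a product of two monic polynomials q(X)·r(X) in A[X], then exactly one of the factors has constant term in M and linear coefficient not in M. -/
/-!
The constant and linear coefficients of `q * r` are `q₀ r₀` and `q₀ r₁ + q₁ r₀`. Since the maximal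
ideal of a valuation ring is prime, `q₀ r₀ ∈ M` puts one of `q₀, r₀` in `M`, say `q₀`. Then
`q₀ r₁ ∈ M`, so `q₁ r₀ ∉ M`, which forces `q₁ ∉ M` and `r₀ ∉ M`: `q` is an N-polynomial and `r`
is not.
-/

open Polynomial

namespace Polynomial

variable {R : Type*} [CommRing R]

/-- The coefficient conditions of an N-polynomial relative to `P`, without monicity. -/
def IsNPolynomial (P : Ideal R) (p : R[X]) : Prop :=
  p.coeff 0 ∈ P ∧ p.coeff 1 ∉ P

theorem IsNPolynomial.left_and_not_right {P : Ideal R} {q r : R[X]}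
    (h : IsNPolynomial P (q * r)) (hq₀ : q.coeff 0 ∈ P) :
    IsNPolynomial P q ∧ ¬IsNPolynomial P r := by
  have hqr₁ : q.coeff 1 * r.coeff 0 ∉ P := fun hmem =>
    h.2 <| mul_coeff_one q r ▸ P.add_mem (P.mul_mem_right _ hq₀) hmem
  exact ⟨⟨hq₀, fun hq₁ => hqr₁ (P.mul_mem_right _ hq₁)⟩,
    fun hr => hqr₁ (P.mul_mem_left _ hr.1)⟩

theorem IsNPolynomial.xor_of_mul {P : Ideal R} [P.IsPrime] {q r : R[X]}
    (h : IsNPolynomial P (q * r)) : Xor (IsNPolynomial P q) (IsNPolynomial P r) := by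
  rcases Ideal.IsPrime.mem_or_mem ‹_› (mul_coeff_zero q r ▸ h.1) with hq₀ | hr₀
  · exact Or.inl (h.left_and_not_right hq₀)
  · exact Or.inr ((mul_comm q r ▸ h).left_and_not_right hr₀)

end Polynomial

theorem stmt_6_general (K : Type*) [Field K]
    (A : Subring K) (hval : ∀ x : K, x ≠ 0 → x ∈ A ∨ x⁻¹ ∈ A)
    (M : Set K) (hM : ∀ x : K, x ∈ M ↔ x ∈ A ∧ (x = 0 ∨ x⁻¹ ∉ A))
    (p q r : Polynomial K)
    (hqA : ∀ i, q.coeff i ∈ A) (hrA : ∀ i, r.coeff i ∈ A)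
    (hfac : p = q * r)
    (hp0 : p.coeff 0 ∈ M) (hp1 : p.coeff 1 ∉ M) :
    ((q.coeff 0 ∈ M ∧ q.coeff 1 ∉ M) ∧ ¬ (r.coeff 0 ∈ M ∧ r.coeff 1 ∉ M)) ∨
    (¬ (q.coeff 0 ∈ M ∧ q.coeff 1 ∉ M) ∧ (r.coeff 0 ∈ M ∧ r.coeff 1 ∉ M)) := by
  let B : ValuationSubring K := .ofSubring A fun x => by
    rcases eq_or_ne x 0 with rfl | hx
    · exact Or.inl A.zero_mem
    · exact hval x hx
  have hMB (a : B) : (a : K) ∈ M ↔ a ∈ IsLocalRing.maximalIdeal B := by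
    rw [← B.coe_mem_nonunits_iff, B.mem_nonunits_iff_or, hM]
    exact and_iff_right a.2
  have lift {f : K[X]} (hf : ∀ i, f.coeff i ∈ A) : ∃ g : B[X], g.map B.subtype = f :=
    (lifts_iff_coeff_lifts f).2 fun i => ⟨⟨_, hf i⟩, rfl⟩
  obtain ⟨q, rfl⟩ := lift hqA
  obtain ⟨r, rfl⟩ := lift hrA
  subst hfac
  simp only [← Polynomial.map_mul, coeff_map, ValuationSubring.coe_subtype, hMB] at hp0 hp1 ⊢
  exact (IsNPolynomial.xor_of_mul ⟨hp0, hp1⟩).imp id And.symm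

/-- Let `K` be real closed, `A` a valuation subring with maximal ideal `M`
(the nonunits of `A`). If a monic N-polynomial `p` (constant term in `M`, linear coefficient
not in `M`) factors as a product of two monic polynomials `q·r` with coefficients in `A`,
then exactly one of the factors is an N-polynomial. -/
theorem stmt_6 (K : Type*) [Field K] [LinearOrder K] [IsStrictOrderedRing K]
    (hsq : ∀ x : K, 0 < x → ∃ y : K, y ^ 2 = x)
    (hodd : ∀ P : Polynomial K, Odd P.natDegree → ∃ x : K, P.eval x = 0)
    (A : Subring K) (hval : ∀ x : K, x ≠ 0 → x ∈ A ∨ x⁻¹ ∈ A)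
    (M : Set K) (hM : ∀ x : K, x ∈ M ↔ x ∈ A ∧ (x = 0 ∨ x⁻¹ ∉ A))
    (p q r : Polynomial K)
    (hqA : ∀ i, q.coeff i ∈ A) (hrA : ∀ i, r.coeff i ∈ A)
    (hp : p.Monic) (hq : q.Monic) (hr : r.Monic)
    (hfac : p = q * r)
    (hp0 : p.coeff 0 ∈ M) (hp1 : p.coeff 1 ∉ M) :
    ((q.coeff 0 ∈ M ∧ q.coeff 1 ∉ M) ∧ ¬ (r.coeff 0 ∈ M ∧ r.coeff 1 ∉ M)) ∨
    (¬ (q.coeff 0 ∈ M ∧ q.coeff 1 ∉ M) ∧ (r.coeff 0 ∈ M ∧ r.coeff 1 ∉ M)) :=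
  stmt_6_general K A hval M hM p q r hqA hrA hfac hp0 hp1
end

section
/- Let K be a non-Archimedean ordered field with a topologically nilpotent element ε (0 < ε and εⁿ → 0 in the order topology). If L is a subfield of K such that K is non-comparable with L, then ε ∉ L. -/
theorem exists_lt_inv_pow_of_pow_small {K : Type*} [Field K] [LinearOrder K]
    [IsStrictOrderedRing K] {ε : K} (hε : 0 < ε)
    (hsmall : ∀ δ : K, 0 < δ → ∃ n : ℕ, ε ^ n < δ) (y : K) :
    ∃ n : ℕ, y < ε⁻¹ ^ n := by
  have hy : 0 < max y 1 := lt_max_of_lt_right one_pos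
  obtain ⟨n, hn⟩ := hsmall (max y 1)⁻¹ (inv_pos.mpr hy)
  refine ⟨n, lt_of_le_of_lt (le_max_left y 1) ?_⟩
  rwa [inv_pow, lt_inv_comm₀ hy (pow_pos hε n)]

theorem stmt_9_general (K : Type*) [Field K] [LinearOrder K] [IsStrictOrderedRing K]
    (ε : K) (hε : 0 < ε)
    (hnil : ∀ δ : K, 0 < δ → ∃ N : ℕ, ∀ n ≥ N, ε ^ n < δ)
    (L : Subfield K) (hnc : ∃ y : K, ∀ a ∈ L, a < y) :
    ε ∉ L := by
  intro hεL
  obtain ⟨y, hy⟩ := hnc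
  obtain ⟨n, hn⟩ := exists_lt_inv_pow_of_pow_small hε
    (fun δ hδ => (hnil δ hδ).imp fun N hN => hN N le_rfl) y
  exact (hy _ (L.pow_mem (L.inv_mem hεL) n)).not_gt hn

/-- In a non-Archimedean ordered field `K` with a topologically nilpotent
element `ε` (i.e. `0 < ε` and `εⁿ → 0`), if `L` is a subfield with which `K` is
non-comparable, then `ε ∉ L`. -/
theorem stmt_9 (K : Type*) [Field K] [LinearOrder K] [IsStrictOrderedRing K]
    (hna : ∃ x : K, ∀ n : ℕ, (n : K) < x)
    (ε : K) (hε : 0 < ε)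
    (hnil : ∀ δ : K, 0 < δ → ∃ N : ℕ, ∀ n ≥ N, ε ^ n < δ)
    (L : Subfield K) (hnc : ∃ y : K, ∀ a ∈ L, a < y) :
    ε ∉ L :=
  stmt_9_general K ε hε hnil L hnc
end

section
/- Let K be a non-Archimedean ordered field in which the element ε = the fixed topologically nilpotent element exists, and let L be a subfield of K, maximal among subfields with which K is non-comparable. Then every element of the maximal ideal M_L (infinitesimals with respect to L) is topologically nilpotent: if x ∈ M_L then lim xⁿ = 0. -/
/-!
Suppose `|xⁿ|` stays above some `δ > 0` for all `n`, with `x ≠ 0`. Then `y = |x|⁻¹` exceeds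
every element of `L`, while all its powers are at most `δ⁻¹`. Since `y` is infinitely large
over `L`, every element `r(y) / s(y)` of `L(y)` is bounded in absolute value by a power of `y`:
the numerator by comparing each coefficient with `y`, and the denominator from below because
its leading term dominates. Hence `L(y)` is bounded by `δ⁻¹ + 1`, so maximality forces
`L(y) = L`, i.e. `y ∈ L`, which is absurd.
-/

open Polynomial Finset IntermediateField

lemma abs_mem_of_mem {G S : Type*} [AddGroup G] [LinearOrder G] [SetLike S G] [NegMemClass S G]
    {s : S} {a : G} (ha : a ∈ s) : |a| ∈ s :=
  (abs_choice a).elim (fun h => h.symm ▸ ha) (fun h => h.symm ▸ neg_mem ha)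

lemma mul_abs_sum_mul_pow_le {R : Type*} [CommRing R] [LinearOrder R] [IsStrictOrderedRing R]
    {y : R} (hy : 1 ≤ y) (a : ℕ → R) (n : ℕ) :
    y * |∑ i ∈ range n, a i * y ^ i| ≤ (∑ i ∈ range n, |a i|) * y ^ n := by
  have hy0 : 0 ≤ y := zero_le_one.trans hy
  calc y * |∑ i ∈ range n, a i * y ^ i| ≤ y * ∑ i ∈ range n, |a i * y ^ i| :=
        mul_le_mul_of_nonneg_left (abs_sum_le_sum_abs _ _) hy0
    _ = ∑ i ∈ range n, |a i| * y ^ (i + 1) := by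
        rw [mul_sum]
        refine sum_congr rfl fun i _ => ?_
        rw [abs_mul, abs_pow, abs_of_nonneg hy0]
        ring
    _ ≤ ∑ i ∈ range n, |a i| * y ^ n :=
        sum_le_sum fun i hi =>
          mul_le_mul_of_nonneg_left (pow_le_pow_right₀ hy (mem_range.1 hi)) (abs_nonneg _)
    _ = (∑ i ∈ range n, |a i|) * y ^ n := (sum_mul _ _ _).symm

lemma Subfield.aeval_eq_sum_range {K : Type*} [Field K] {L : Subfield K} (p : L[X]) (y : K) :
    aeval y p = ∑ i ∈ range (p.natDegree + 1), (p.coeff i : K) * y ^ i :=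
  Polynomial.aeval_eq_sum_range y

section InfinitelyLarge

variable {K : Type*} [Field K] [LinearOrder K] [IsStrictOrderedRing K] {L : Subfield K} {y : K}

lemma lt_inv_abs_of_forall_abs_lt {x : K} (hx0 : x ≠ 0) (hx : ∀ a ∈ L, 0 < a → |x| < a) :
    ∀ a ∈ L, a < |x|⁻¹ := by
  intro a ha
  have hx0' : 0 < |x| := abs_pos.2 hx0
  rcases le_or_gt a 0 with ha0 | ha0
  · exact ha0.trans_lt (inv_pos.2 hx0')
  · exact (lt_inv_comm₀ ha0 hx0').2 (hx _ (inv_mem ha) (inv_pos.2 ha0))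

lemma abs_aeval_le_pow (hy : ∀ a ∈ L, a < y) (p : L[X]) :
    |aeval y p| ≤ y ^ (p.natDegree + 1) := by
  have hy1 := hy 1 L.one_mem
  set A := ∑ i ∈ range (p.natDegree + 1), |(p.coeff i : K)|
  have hA : A < y := hy _ (sum_mem fun i _ => abs_mem_of_mem (p.coeff i).2)
  refine le_of_mul_le_mul_left ?_ (zero_lt_one.trans hy1)
  calc y * |aeval y p| ≤ A * y ^ (p.natDegree + 1) := by
        rw [Subfield.aeval_eq_sum_range]
        exact mul_abs_sum_mul_pow_le hy1.le _ _
    _ ≤ y * y ^ (p.natDegree + 1) := by gcongr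

lemma one_le_mul_abs_aeval (hy : ∀ a ∈ L, a < y) {p : L[X]} (hp : p ≠ 0) :
    1 ≤ y * |aeval y p| := by
  have hy1 := hy 1 L.one_mem
  have hy0 : 0 < y := zero_lt_one.trans hy1
  set d := p.natDegree
  set c : K := (p.coeff d : K)
  set S := ∑ i ∈ range d, (p.coeff i : K) * y ^ i
  set A := ∑ i ∈ range d, |(p.coeff i : K)|
  have hc : 0 < |c| := abs_pos.2 (by simpa [c, d] using hp)
  have hS : y * |S| ≤ A * y ^ d := mul_abs_sum_mul_pow_le hy1.le _ _
  -- `(A + 1) / |c|` lies in `L`, so the leading term beats the others by at least `y ^ d`.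
  have hlead : A + 1 < |c| * y := by
    have hAc : (A + 1) / |c| ∈ L :=
      div_mem (add_mem (sum_mem fun i _ => abs_mem_of_mem (p.coeff i).2) L.one_mem)
        (abs_mem_of_mem (p.coeff d).2)
    rw [← div_lt_iff₀' hc]
    exact hy _ hAc
  have heval : aeval y p = S + c * y ^ d := by
    rw [Subfield.aeval_eq_sum_range, sum_range_succ]
  have htri : |c * y ^ d| ≤ |aeval y p| + |S| := by
    simpa [heval] using abs_sub (S + c * y ^ d) S
  have hytri := mul_le_mul_of_nonneg_left htri hy0.le
  calc (1 : K) ≤ y ^ d := one_le_pow₀ hy1.le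
    _ ≤ (|c| * y - A) * y ^ d := le_mul_of_one_le_left (pow_nonneg hy0.le d) (by linarith)
    _ = y * |c * y ^ d| - A * y ^ d := by
        rw [abs_mul, abs_pow, abs_of_pos hy0]
        ring
    _ ≤ y * |aeval y p| := by linarith

lemma exists_abs_le_pow_of_mem_adjoin (hy : ∀ a ∈ L, a < y) {f : K} (hf : f ∈ L⟮y⟯) :
    ∃ m : ℕ, |f| ≤ y ^ m := by
  obtain ⟨r, s, rfl⟩ := (mem_adjoin_simple_iff L f).1 hf
  rcases eq_or_ne (aeval y s) 0 with hs | hs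
  · exact ⟨0, by simp [hs]⟩
  have hs' : 0 < |aeval y s| := abs_pos.2 hs
  have hinv : |aeval y s|⁻¹ ≤ y :=
    (inv_le_iff_one_le_mul₀ hs').2 (one_le_mul_abs_aeval hy fun h => hs (by rw [h, map_zero]))
  refine ⟨r.natDegree + 2, ?_⟩
  rw [abs_div, div_eq_mul_inv, pow_succ]
  exact mul_le_mul (abs_aeval_le_pow hy r) hinv (inv_nonneg.2 hs'.le)
    (pow_nonneg (zero_le_one.trans (hy 1 L.one_mem).le) _)

lemma exists_lt_pow_of_forall_lt (hy : ∀ a ∈ L, a < y)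
    (hmax : ∀ L' : Subfield K, L ≤ L' → (∃ y : K, ∀ a ∈ L', a < y) → L' = L) (B : K) :
    ∃ n : ℕ, B < y ^ n := by
  by_contra! hpow
  have hbdd : ∃ b : K, ∀ f ∈ L⟮y⟯.toSubfield, f < b := by
    refine ⟨B + 1, fun f hf => ?_⟩
    obtain ⟨m, hm⟩ := exists_abs_le_pow_of_mem_adjoin hy hf
    linarith [le_abs_self f, hpow m]
  have hle : L ≤ L⟮y⟯.toSubfield := fun a ha =>
    IntermediateField.algebraMap_mem L⟮y⟯ (⟨a, ha⟩ : L)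
  have hyL : y ∈ L := hmax _ hle hbdd ▸ mem_adjoin_simple_self L y
  exact lt_irrefl y (hy y hyL)

end InfinitelyLarge

theorem stmt_10_general (K : Type*) [Field K] [LinearOrder K] [IsStrictOrderedRing K]
    (L : Subfield K)
    (hmax : ∀ L' : Subfield K, L ≤ L' → (∃ y : K, ∀ a ∈ L', a < y) → L' = L)
    (x : K) (hx : ∀ a ∈ L, 0 < a → |x| < a) :
    ∀ δ : K, 0 < δ → ∃ N : ℕ, ∀ n ≥ N, |x ^ n| < δ := by
  intro δ hδ
  rcases eq_or_ne x 0 with rfl | hx0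
  · exact ⟨1, fun n hn => by simpa [zero_pow (by omega : n ≠ 0)] using hδ⟩
  have hx0' : 0 < |x| := abs_pos.2 hx0
  obtain ⟨N, hN⟩ := exists_lt_pow_of_forall_lt (lt_inv_abs_of_forall_abs_lt hx0 hx) hmax δ⁻¹
  have hxN : |x| ^ N < δ := by
    rwa [inv_pow, inv_lt_inv₀ hδ (pow_pos hx0' N)] at hN
  refine ⟨N, fun n hn => ?_⟩
  rw [abs_pow]
  exact (pow_le_pow_of_le_one hx0'.le (hx 1 L.one_mem one_pos).le hn).trans_lt hxN

/-- Let `K` be a non-Archimedean ordered field containing a topologically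
nilpotent element `ε`, and let `L` be maximal among the subfields with which `K` is
non-comparable. Then every element of the ideal `M_L` of infinitesimals with respect to `L`
is topologically nilpotent. -/
theorem stmt_10 (K : Type*) [Field K] [LinearOrder K] [IsStrictOrderedRing K]
    (hna : ∃ x : K, ∀ n : ℕ, (n : K) < x)
    (ε : K) (hε : 0 < ε)
    (hnil : ∀ δ : K, 0 < δ → ∃ N : ℕ, ∀ n ≥ N, ε ^ n < δ)
    (L : Subfield K) (hnc : ∃ y : K, ∀ a ∈ L, a < y)
    (hmax : ∀ L' : Subfield K, L ≤ L' → (∃ y : K, ∀ a ∈ L', a < y) → L' = L)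
    (x : K) (hx : ∀ a ∈ L, 0 < a → |x| < a) :
    ∀ δ : K, 0 < δ → ∃ N : ℕ, ∀ n ≥ N, |x ^ n| < δ :=
  stmt_10_general K L hmax x hx
end

section
/- Let K be a non-Archimedean ordered field and L a subfield with which K is non-comparable. Suppose (ε_n) is a strictly decreasing sequence of positive elements with ε_0 = 1, each ε_n (n ≥ 1) infinitesimal with respect to L, ε_n^i > ε_{n+1} for all i, and {x : |x| < ε_n} a neighbourhood basis of 0. Then for every n, the principal ideal ε_{n+1}·A_L of the ring A_L of non-infinitely-large elements satisfies {x ∈ A_L : |x| < ε_{n+1}} ⊆ ε_{n+1}A_L ⊆ {x ∈ A_L : |x| < ε_n}. In particular the order topology on A_L is a linear topology. -/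
/-!
The key inequality is `ε (n + 1) * a < ε n` for every positive `a ∈ L`. Since `a⁻¹ ∈ L`,
infinitesimality gives `ε m * a < 1` for `m ≥ 1`; this is the claim for `n = 0` (as `ε 0 = 1`),
and for `n ≥ 1` we use `ε (n + 1) < ε n ^ 2 = ε n * ε n`. Both inclusions then follow by
writing `x = ε (n + 1) * (x / ε (n + 1))`.
-/

theorem eps_succ_mul_lt {K : Type*} [Field K] [LinearOrder K] [IsStrictOrderedRing K]
    {L : Subfield K} {ε : ℕ → K} (h0 : ε 0 = 1) (hpos : ∀ n, 0 < ε n)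
    (hinf : ∀ n : ℕ, 1 ≤ n → ∀ a ∈ L, 0 < a → ε n < a)
    (hpow : ∀ n i : ℕ, ε (n + 1) < ε n ^ i) (n : ℕ) {a : K} (haL : a ∈ L) (ha : 0 < a) :
    ε (n + 1) * a < ε n := by
  have hmul_lt_one : ∀ m, 1 ≤ m → ε m * a < 1 := fun m hm =>
    (lt_mul_inv_iff₀ ha).1 <| by
      rw [one_mul]
      exact hinf m hm a⁻¹ (L.inv_mem haL) (inv_pos.2 ha)
  rcases n with _ | n
  · simpa [h0] using hmul_lt_one 1 le_rfl
  · calc ε (n + 2) * a < ε (n + 1) ^ 2 * a := by gcongr; exact hpow _ 2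
      _ = ε (n + 1) * (ε (n + 1) * a) := by ring
      _ < ε (n + 1) * 1 := by gcongr; exacts [hpos _, hmul_lt_one _ (Nat.le_add_left 1 n)]
      _ = ε (n + 1) := mul_one _

theorem stmt_12_general (K : Type*) [Field K] [LinearOrder K] [IsStrictOrderedRing K] (L : Subfield K)
    (ε : ℕ → K) (h0 : ε 0 = 1) (hpos : ∀ n, 0 < ε n)
    (hinf : ∀ n : ℕ, 1 ≤ n → ∀ a ∈ L, 0 < a → ε n < a)
    (hpow : ∀ n i : ℕ, ε (n + 1) < ε n ^ i)
    (n : ℕ) :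
    {x : K | (∃ a ∈ L, 0 < a ∧ |x| ≤ a) ∧ |x| < ε (n + 1)} ⊆
      {x : K | ∃ y : K, (∃ a ∈ L, 0 < a ∧ |y| ≤ a) ∧ x = ε (n + 1) * y} ∧
    {x : K | ∃ y : K, (∃ a ∈ L, 0 < a ∧ |y| ≤ a) ∧ x = ε (n + 1) * y} ⊆
      {x : K | (∃ a ∈ L, 0 < a ∧ |x| ≤ a) ∧ |x| < ε n} := by
  have hε := hpos (n + 1)
  have hε_lt_one : ε (n + 1) < 1 := by simpa using hpow n 0
  refine ⟨?_, ?_⟩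
  · rintro x ⟨-, hx⟩
    refine ⟨x / ε (n + 1), ⟨1, L.one_mem, one_pos, ?_⟩, (mul_div_cancel₀ x hε.ne').symm⟩
    rw [abs_div, abs_of_pos hε, div_le_one hε]
    exact hx.le
  · rintro x ⟨y, ⟨a, haL, ha, hya⟩, rfl⟩
    have hle : |ε (n + 1) * y| ≤ ε (n + 1) * a := by
      rw [abs_mul, abs_of_pos hε]
      gcongr
    exact ⟨⟨a, haL, ha, hle.trans (mul_le_of_le_one_left ha.le hε_lt_one.le)⟩,
      hle.trans_lt (eps_succ_mul_lt h0 hpos hinf hpow n haL ha)⟩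

/-- With `(ε_n)` a strictly decreasing sequence of positive elements, `ε_0 = 1`,
each `ε_n` (n ≥ 1) infinitesimal with respect to `L` and `ε_n^i > ε_{n+1}` for all `i`, the
principal ideal `ε_{n+1}·A_L` of the ring `A_L` of non-infinitely-large elements is squeezed
between the order-neighbourhoods `{x ∈ A_L : |x| < ε_{n+1}}` and `{x ∈ A_L : |x| < ε_n}`;
hence the order topology on `A_L` is linear. -/
theorem stmt_12 (K : Type*) [Field K] [LinearOrder K] [IsStrictOrderedRing K] (L : Subfield K)
    (hnc : ∃ y : K, ∀ a ∈ L, a < y)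
    (ε : ℕ → K) (h0 : ε 0 = 1) (hpos : ∀ n, 0 < ε n) (hanti : StrictAnti ε)
    (hinf : ∀ n : ℕ, 1 ≤ n → ∀ a ∈ L, 0 < a → ε n < a)
    (hpow : ∀ n i : ℕ, ε (n + 1) < ε n ^ i)
    (n : ℕ) :
    {x : K | (∃ a ∈ L, 0 < a ∧ |x| ≤ a) ∧ |x| < ε (n + 1)} ⊆
      {x : K | ∃ y : K, (∃ a ∈ L, 0 < a ∧ |y| ≤ a) ∧ x = ε (n + 1) * y} ∧
    {x : K | ∃ y : K, (∃ a ∈ L, 0 < a ∧ |y| ≤ a) ∧ x = ε (n + 1) * y} ⊆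
      {x : K | (∃ a ∈ L, 0 < a ∧ |x| ≤ a) ∧ |x| < ε n} :=
  stmt_12_general K L ε h0 hpos hinf hpow n
end

section
/- Let K be a Cauchy complete ordered field and L a subfield with which K is non-comparable. Then the ring A_L of elements not infinitely large with respect to L is closed in K (in the order topology) and Cauchy complete, and the ideal M_L of infinitesimals with respect to L is closed in A_L. -/
namespace OrderedField

variable {K : Type*} [Field K] [LinearOrder K] [IsStrictOrderedRing K]

def SeqTendsto (c : ℕ → K) (l : K) : Prop :=
  ∀ δ : K, 0 < δ → ∃ N : ℕ, ∀ n ≥ N, |c n - l| < δ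

/-- `x ∈ A_L` -/
def IsLBounded (L : Subsemiring K) (x : K) : Prop :=
  ∃ a ∈ L, 0 < a ∧ |x| ≤ a

/-- `x ∈ M_L` -/
def IsLInfinitesimal (L : Subfield K) (x : K) : Prop :=
  ∀ a ∈ L, 0 < a → |x| < a

lemma abs_lt_abs_add_of_abs_sub_lt {x l δ : K} (h : |x - l| < δ) : |l| < |x| + δ := by
  have := abs_sub_abs_le_abs_sub l x
  rw [abs_sub_comm l x] at this
  linarith

lemma SeqTendsto.isLBounded {L : Subsemiring K} {c : ℕ → K} {l : K}
    (hc : ∀ n, IsLBounded L (c n)) (hl : SeqTendsto c l) : IsLBounded L l := by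
  obtain ⟨N, hN⟩ := hl 1 one_pos
  obtain ⟨a, haL, ha, hca⟩ := hc N
  refine ⟨a + 1, L.add_mem haL L.one_mem, by linarith, ?_⟩
  linarith [abs_lt_abs_add_of_abs_sub_lt (hN N le_rfl)]

lemma SeqTendsto.isLInfinitesimal {L : Subfield K} {c : ℕ → K} {l : K}
    (hc : ∀ n, IsLInfinitesimal L (c n)) (hl : SeqTendsto c l) : IsLInfinitesimal L l := by
  intro a haL ha
  obtain ⟨N, hN⟩ := hl (a / 2) (half_pos ha)
  have hhalf : a / 2 ∈ L := L.div_mem haL (by exact_mod_cast natCast_mem L 2)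
  have hcN := hc N (a / 2) hhalf (half_pos ha)
  linarith [abs_lt_abs_add_of_abs_sub_lt (hN N le_rfl)]

end OrderedField

open OrderedField in
theorem stmt_13_general (K : Type*) [Field K] [LinearOrder K] [IsStrictOrderedRing K]
    (hcomplete : ∀ c : ℕ → K,
      (∀ δ : K, 0 < δ → ∃ N : ℕ, ∀ m ≥ N, ∀ n ≥ N, |c m - c n| < δ) →
      ∃ l : K, ∀ δ : K, 0 < δ → ∃ N : ℕ, ∀ n ≥ N, |c n - l| < δ)
    (L : Subfield K) :
    -- A_L is closed in K
    (∀ (c : ℕ → K) (l : K), (∀ n, ∃ a ∈ L, 0 < a ∧ |c n| ≤ a) →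
      (∀ δ : K, 0 < δ → ∃ N : ℕ, ∀ n ≥ N, |c n - l| < δ) →
      ∃ a ∈ L, 0 < a ∧ |l| ≤ a) ∧
    -- A_L is Cauchy complete
    (∀ c : ℕ → K, (∀ n, ∃ a ∈ L, 0 < a ∧ |c n| ≤ a) →
      (∀ δ : K, 0 < δ → ∃ N : ℕ, ∀ m ≥ N, ∀ n ≥ N, |c m - c n| < δ) →
      ∃ l : K, (∃ a ∈ L, 0 < a ∧ |l| ≤ a) ∧
        ∀ δ : K, 0 < δ → ∃ N : ℕ, ∀ n ≥ N, |c n - l| < δ) ∧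
    -- M_L is closed in A_L
    (∀ (c : ℕ → K) (l : K), (∀ n, ∀ a ∈ L, 0 < a → |c n| < a) →
      (∃ a ∈ L, 0 < a ∧ |l| ≤ a) →
      (∀ δ : K, 0 < δ → ∃ N : ℕ, ∀ n ≥ N, |c n - l| < δ) →
      ∀ a ∈ L, 0 < a → |l| < a) := by
  refine ⟨fun c l hc hl ↦ SeqTendsto.isLBounded (L := L.toSubsemiring) hc hl, ?_,
    fun c l hc _ hl ↦ SeqTendsto.isLInfinitesimal (L := L) hc hl⟩
  intro c hc hcauchy
  obtain ⟨l, hl⟩ := hcomplete c hcauchy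
  exact ⟨l, SeqTendsto.isLBounded (L := L.toSubsemiring) hc hl, hl⟩

/-- Over a Cauchy complete ordered field `K` (convergence expressed via
sequences, the order topology being first countable), for a subfield `L` with which `K` is
non-comparable: the ring `A_L` of non-infinitely-large elements is closed in `K` and Cauchy
complete, and the ideal `M_L` of infinitesimals is closed in `A_L`. -/
theorem stmt_13 (K : Type*) [Field K] [LinearOrder K] [IsStrictOrderedRing K]
    (hcomplete : ∀ c : ℕ → K,
      (∀ δ : K, 0 < δ → ∃ N : ℕ, ∀ m ≥ N, ∀ n ≥ N, |c m - c n| < δ) →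
      ∃ l : K, ∀ δ : K, 0 < δ → ∃ N : ℕ, ∀ n ≥ N, |c n - l| < δ)
    (L : Subfield K) (hnc : ∃ y : K, ∀ a ∈ L, a < y) :
    -- A_L is closed in K
    (∀ (c : ℕ → K) (l : K), (∀ n, ∃ a ∈ L, 0 < a ∧ |c n| ≤ a) →
      (∀ δ : K, 0 < δ → ∃ N : ℕ, ∀ n ≥ N, |c n - l| < δ) →
      ∃ a ∈ L, 0 < a ∧ |l| ≤ a) ∧
    -- A_L is Cauchy complete
    (∀ c : ℕ → K, (∀ n, ∃ a ∈ L, 0 < a ∧ |c n| ≤ a) →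
      (∀ δ : K, 0 < δ → ∃ N : ℕ, ∀ m ≥ N, ∀ n ≥ N, |c m - c n| < δ) →
      ∃ l : K, (∃ a ∈ L, 0 < a ∧ |l| ≤ a) ∧
        ∀ δ : K, 0 < δ → ∃ N : ℕ, ∀ n ≥ N, |c n - l| < δ) ∧
    -- M_L is closed in A_L
    (∀ (c : ℕ → K) (l : K), (∀ n, ∀ a ∈ L, 0 < a → |c n| < a) →
      (∃ a ∈ L, 0 < a ∧ |l| ≤ a) →
      (∀ δ : K, 0 < δ → ∃ N : ℕ, ∀ n ≥ N, |c n - l| < δ) →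
      ∀ a ∈ L, 0 < a → |l| < a) :=
  stmt_13_general K hcomplete L
end
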